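/- Let V be a complex Hilbert space and φ : (−1,1) → B(V) a bounded positive definite function on the *-semigroup ((−1,1), ·) with trivial involution. If φ is weakly analytic, i.e. there exists a dense linear subspace E ⊆ V such that for all v, w ∈ E the function t ↦ ⟨φ(t)v, w⟩ is real analytic on (−1,1), then φ is completely positive. -/

import Mathlib

/- STATEMENT 16: A bounded, weakly analytic, positive definite function
`φ : (−1,1) → B(V)` is completely positive.  Weak analyticity means there is a
dense linear subspace `E ⊆ V` such that `t ↦ ⟨φ(t)v, w⟩` is real analytic on
`(−1,1)` for all `v, w ∈ E`. -/

open scoped ComplexOrder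

noncomputable section

universe v

open Finset Filter Topology FormalMultilinearSeries

set_option maxHeartbeats 1000000

private lemma fwdDiff_pow_step (m : ℕ) :
    fwdDiff (1 : ℕ) (fun x : ℕ => (x : ℝ) ^ m) =
      fun x : ℕ => ∑ k ∈ range m, ((m.choose k : ℝ)) • ((x : ℝ) ^ k) := by
  funext x
  simp only [fwdDiff, Nat.cast_add, Nat.cast_one]
  rw [add_pow]
  rw [Finset.sum_range_succ]
  simp [smul_eq_mul, mul_comm]

private lemma fwdDiff_iter_pow (m : ℕ) :
    (∀ N x, m < N → (fwdDiff (1:ℕ))^[N] (fun x : ℕ => (x : ℝ) ^ m) x = 0) ∧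
      (∀ x, (fwdDiff (1:ℕ))^[m] (fun x : ℕ => (x : ℝ) ^ m) x = (m.factorial : ℝ)) := by
  induction m using Nat.strong_induction_on with
  | _ m IH =>
    have step : ∀ N x, (fwdDiff (1:ℕ))^[N+1] (fun x : ℕ => (x : ℝ) ^ m) x
        = ∑ k ∈ range m, (m.choose k : ℝ) • ((fwdDiff (1:ℕ))^[N] (fun x : ℕ => (x : ℝ) ^ k) x) := by
      intro N x
      rw [Function.iterate_succ_apply, fwdDiff_pow_step]
      have : (fun x : ℕ => ∑ k ∈ range m, ((m.choose k : ℝ)) • ((x : ℝ) ^ k))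
          = ∑ k ∈ range m, (m.choose k : ℝ) • (fun x : ℕ => (x : ℝ) ^ k) := by
        funext y; simp
      rw [this, fwdDiff_iter_finset_sum]
      simp [fwdDiff_iter_const_smul]
    constructor
    · intro N x hmN
      obtain ⟨N', rfl⟩ : ∃ N', N = N' + 1 := ⟨N - 1, by omega⟩
      rw [step]
      apply Finset.sum_eq_zero
      intro k hk
      have hk' : k < m := Finset.mem_range.mp hk
      rw [(IH k hk').1 N' x (by omega), smul_zero]
    · intro x
      rcases Nat.eq_zero_or_pos m with rfl | hm
      · simp
      obtain ⟨m', rfl⟩ : ∃ m', m = m' + 1 := ⟨m - 1, by omega⟩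
      rw [step]
      rw [Finset.sum_eq_single m']
      · rw [(IH m' (by omega)).2 x]
        simp [Nat.factorial_succ, Nat.choose_succ_self_right]
      · intro k hk hkm
        have hk' : k < m' + 1 := Finset.mem_range.mp hk
        rw [(IH k hk').1 m' x (by omega), smul_zero]
      · intro h; exact absurd (Finset.self_mem_range_succ m') h

/-- `S N m = ∑ j ∈ range (N+1), (-1)^j * C(N,j) * j^m`. -/
noncomputable def altS (N m : ℕ) : ℝ :=
  ∑ j ∈ range (N + 1), (-1 : ℝ) ^ j * (N.choose j : ℝ) * (j : ℝ) ^ m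

lemma altS_eq (N m : ℕ) : altS N m = (-1 : ℝ) ^ N * (fwdDiff (1:ℕ))^[N] (fun x : ℕ => (x:ℝ)^m) 0 := by
  rw [fwdDiff_iter_eq_sum_shift, Finset.mul_sum, altS]
  apply Finset.sum_congr rfl
  intro j hj
  have hjN' : j ≤ N := Nat.lt_succ_iff.mp (Finset.mem_range.mp hj)
  have h2 : (-1:ℝ)^(N-j) * (-1)^j = (-1)^N := by rw [← pow_add, Nat.sub_add_cancel hjN']
  have h3 : (-1:ℝ)^j * (-1)^j = 1 := by rw [← mul_pow]; norm_num
  have h4 : (-1:ℝ)^N * (-1)^N = 1 := by rw [← mul_pow]; norm_num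
  have hsign : (-1:ℝ)^(N-j) = (-1)^N * (-1)^j := by
    calc (-1:ℝ)^(N-j) = (-1)^(N-j) * ((-1)^j * (-1)^j) := by rw [h3, mul_one]
      _ = ((-1)^(N-j) * (-1)^j) * (-1)^j := by ring
      _ = (-1)^N * (-1)^j := by rw [h2]
  rw [zsmul_eq_mul]
  push_cast
  rw [hsign]
  simp only [zero_add, smul_eq_mul, mul_one]
  push_cast
  linear_combination (-((-1:ℝ)^j * (N.choose j:ℝ) * (j:ℝ)^m)) * h4

lemma altS_eq_zero {N m : ℕ} (h : m < N) : altS N m = 0 := by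
  rw [altS_eq, (fwdDiff_iter_pow m).1 N 0 h, mul_zero]

lemma altS_self (N : ℕ) : altS N N = (-1 : ℝ) ^ N * (N.factorial : ℝ) := by
  rw [altS_eq, (fwdDiff_iter_pow N).2 0]

lemma geom_summable_bound {d : ℕ → ℂ} {A ρ : ℝ} (hρ : 0 < ρ)
    (hA : ∀ m, ‖d m‖ * ρ ^ m ≤ A) {u : ℝ} (hu : |u| ≤ ρ/4) :
    Summable (fun m => d m * (u:ℂ)^m) ∧
      ‖(∑' m, d m * (u:ℂ)^m) - d 0‖ ≤ 2*A/ρ * |u| := by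
  have hA0 : 0 ≤ A := le_trans (by positivity) (hA 0)
  set q : ℝ := |u| / ρ with hq
  have hq0 : 0 ≤ q := by positivity
  have hq4 : q ≤ 1/4 := by
    rw [hq, div_le_div_iff₀ hρ (by norm_num)]
    linarith
  have hq1 : q < 1 := lt_of_le_of_lt hq4 (by norm_num)
  have hbound : ∀ m, ‖d m * (u:ℂ)^m‖ ≤ A * q ^ m := by
    intro m
    rw [norm_mul, norm_pow, Complex.norm_real, Real.norm_eq_abs]
    have h1 : ‖d m‖ ≤ A / ρ ^ m := by
      rw [le_div_iff₀ (by positivity)]; exact hA m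
    calc ‖d m‖ * |u| ^ m ≤ (A / ρ ^ m) * |u| ^ m := by
          apply mul_le_mul_of_nonneg_right h1 (by positivity)
      _ = A * q ^ m := by rw [hq, div_pow]; ring
  have hgeom : Summable (fun m : ℕ => A * q ^ m) :=
    (summable_geometric_of_lt_one hq0 hq1).mul_left A
  have hs : Summable (fun m => d m * (u:ℂ)^m) :=
    Summable.of_norm (hgeom.of_nonneg_of_le (fun m => norm_nonneg _) hbound)
  refine ⟨hs, ?_⟩
  have h0 : (∑' m, d m * (u:ℂ)^m) = d 0 + ∑' m, d (m+1) * (u:ℂ)^(m+1) := by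
    rw [Summable.tsum_eq_zero_add hs]; simp
  rw [h0, add_sub_cancel_left]
  have hs1 : Summable (fun m => ‖d (m+1) * (u:ℂ)^(m+1)‖) := by
    apply Summable.of_nonneg_of_le (fun m => norm_nonneg _) (fun m => hbound (m+1))
    exact ((summable_geometric_of_lt_one hq0 hq1).mul_left (A*q)).congr
      (fun m => by rw [pow_succ]; ring)
  calc ‖∑' m, d (m+1) * (u:ℂ)^(m+1)‖ ≤ ∑' m, ‖d (m+1) * (u:ℂ)^(m+1)‖ :=
        norm_tsum_le_tsum_norm hs1
    _ ≤ ∑' m : ℕ, (A*q) * q^m := by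
        apply Summable.tsum_le_tsum _ hs1 ((summable_geometric_of_lt_one hq0 hq1).mul_left (A*q))
        intro m
        calc ‖d (m+1) * (u:ℂ)^(m+1)‖ ≤ A * q^(m+1) := hbound (m+1)
          _ = (A*q)*q^m := by rw [pow_succ]; ring
    _ = (A*q) * (1-q)⁻¹ := by
        rw [tsum_mul_left, tsum_geometric_of_lt_one hq0 hq1]
    _ ≤ 2*A/ρ * |u| := by
        have h34 : (3/4 : ℝ) ≤ 1 - q := by linarith
        have hinv : (1-q)⁻¹ ≤ 4/3 := by
          rw [inv_le_comm₀ (by linarith) (by norm_num)]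
          linarith
        have hAq : 0 ≤ A * q := mul_nonneg hA0 hq0
        calc (A*q) * (1-q)⁻¹ ≤ (A*q) * (4/3) := mul_le_mul_of_nonneg_left hinv hAq
          _ ≤ 2*A/ρ * |u| := by
              rw [hq]
              have he : 2*A/ρ*|u| - A*(|u|/ρ)*(4/3) = (2/3)*(A*|u|/ρ) := by ring
              have hX : (0:ℝ) ≤ A*|u|/ρ := by positivity
              linarith [he, hX]

lemma coeff_zero_of_hasSum_zero {c : ℕ → ℂ} {r : ℝ} (hr : 0 < r)
    (h : ∀ z : ℝ, 0 < z → z < r → HasSum (fun m => c m * (z:ℂ)^m) 0) : c 0 = 0 := by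
  set ρ : ℝ := r/2 with hρdef
  have hρ : 0 < ρ := by positivity
  have hsum : Summable (fun m => ‖c m * (ρ:ℂ)^m‖) := by
    rw [show (fun m => ‖c m * (ρ:ℂ)^m‖) = fun m => ‖(fun m => c m * (ρ:ℂ)^m) m‖ from rfl,
      summable_norm_iff]
    exact (h ρ hρ (by rw [hρdef]; linarith)).summable
  set A : ℝ := ∑' m, ‖c m * (ρ:ℂ)^m‖ with hAdef
  have hA : ∀ m, ‖c m‖ * ρ ^ m ≤ A := by
    intro m
    have := Summable.le_tsum hsum m (fun k _ => norm_nonneg _)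
    rwa [norm_mul, norm_pow, Complex.norm_real, Real.norm_eq_abs, abs_of_pos hρ] at this
  have key : ∀ u : ℝ, 0 < u → u ≤ ρ/4 → ‖c 0‖ ≤ 2*A/ρ * u := by
    intro u hu hu4
    have hur : u < r := by
      have : ρ/4 < r := by rw [hρdef]; linarith
      linarith
    have := (geom_summable_bound hρ hA (u := u) (by rw [abs_of_pos hu]; exact hu4)).2
    rw [(h u hu hur).tsum_eq, zero_sub, norm_neg, abs_of_pos hu] at this
    exact this
  have htend : Tendsto (fun u : ℝ => 2*A/ρ * u) (𝓝[>] 0) (𝓝 0) := by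
    apply tendsto_nhdsWithin_of_tendsto_nhds
    have hcont : Continuous (fun u : ℝ => 2*A/ρ * u) := by continuity
    have := hcont.tendsto 0
    rwa [mul_zero] at this
  have hev : ∀ᶠ u in 𝓝[>] (0:ℝ), ‖c 0‖ ≤ 2*A/ρ * u := by
    filter_upwards [Ioc_mem_nhdsGT_of_mem (Set.left_mem_Ico.mpr (by positivity : (0:ℝ) < ρ/4))]
      with u hu
    exact key u hu.1 hu.2
  have : ‖c 0‖ ≤ 0 := ge_of_tendsto htend hev
  simpa using norm_le_zero_iff.mp this

lemma coeff_zero_of_hasSum_zero' {c : ℕ → ℂ} {r : ℝ} (hr : 0 < r)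
    (h : ∀ z : ℝ, 0 < z → z < r → HasSum (fun m => c m * (z:ℂ)^m) 0) : ∀ m, c m = 0 := by
  intro m
  induction m generalizing c with
  | zero => exact coeff_zero_of_hasSum_zero hr h
  | succ n IH =>
    have h0 : c 0 = 0 := coeff_zero_of_hasSum_zero hr h
    apply IH (c := fun m => c (m+1))
    intro z hz hzr
    have h1 := (hasSum_nat_add_iff' (f := fun m => c m * (z:ℂ)^m) 1).mpr (h z hz hzr)
    simp only [Finset.range_one, Finset.sum_singleton, pow_zero, mul_one, h0, zero_sub,
      zero_mul, neg_zero] at h1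
    have h2 := h1.mul_left ((z:ℂ)⁻¹)
    rw [mul_zero] at h2
    have hz0 : (z:ℂ) ≠ 0 := by
      simpa using (ne_of_gt hz)
    have h3 : (fun n => (z:ℂ)⁻¹ * (c (n+1) * (z:ℂ)^(n+1))) = (fun n => c (n+1) * (z:ℂ)^n) := by
      funext n
      field_simp
      ring
    exact h3 ▸ h2


lemma coeff_unique_of_hasSum {c d : ℕ → ℂ} {r : ℝ} (hr : 0 < r) {f : ℝ → ℂ}
    (h1 : ∀ z : ℝ, 0 < z → z < r → HasSum (fun m => c m * (z:ℂ)^m) (f z))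
    (h2 : ∀ z : ℝ, 0 < z → z < r → HasSum (fun m => d m * (z:ℂ)^m) (f z)) : ∀ m, c m = d m := by
  intro m
  have h := coeff_zero_of_hasSum_zero' (c := fun m => c m - d m) hr ?_ m
  · exact sub_eq_zero.mp h
  · intro z hz hzr
    have h3 := (h1 z hz hzr).sub (h2 z hz hzr)
    rw [sub_self] at h3
    have h4 : (fun m => c m * (z:ℂ)^m - d m * (z:ℂ)^m) = fun m => (c m - d m) * (z:ℂ)^m := by
      funext n; ring
    exact h4 ▸ h3

noncomputable def diagEquiv : (Σ n : ℕ, Fin (n+1)) ≃ ℕ × ℕ where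
  toFun x := ((x.2 : ℕ), x.1 - (x.2 : ℕ))
  invFun p := ⟨p.1 + p.2, ⟨p.1, by omega⟩⟩
  left_inv := by
    rintro ⟨n, j⟩
    have hj : (j : ℕ) ≤ n := Nat.lt_succ_iff.mp j.isLt
    have h1 : (j : ℕ) + (n - (j : ℕ)) = n := by omega
    dsimp only
    refine Sigma.ext h1 ?_
    rw [Fin.heq_ext_iff (show (j:ℕ) + (n - (j:ℕ)) + 1 = n + 1 by omega)]
  right_inv := by
    rintro ⟨k, m⟩
    have h1 : k + m - k = m := by omega
    simp [h1]

lemma binom_rearrange {γ : ℕ → ℝ} (hγ : ∀ m, 0 ≤ γ m) {a z : ℝ} (ha : 0 ≤ a) (hz : 0 < z)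
    {s : ℝ} (hs : HasSum (fun n => γ n * (a + z)^n) s) :
    (∀ k, Summable (fun m => γ (m+k) * ((m+k).choose k : ℝ) * a^m)) ∧
    HasSum (fun k => (∑' m, γ (m+k) * ((m+k).choose k : ℝ) * a^m) * z^k) s := by
  classical
  set Fp : ℕ × ℕ → ℝ := fun p => γ (p.2 + p.1) * (((p.2 + p.1).choose p.1 : ℕ) : ℝ) * a^p.2 * z^p.1
    with hFpdef
  have hFpnn : ∀ p, 0 ≤ Fp p := by
    intro p
    apply mul_nonneg
    apply mul_nonneg
    apply mul_nonneg (hγ _) (by positivity)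
    all_goals positivity
  have hcomp : ∀ x : Σ n : ℕ, Fin (n+1),
      Fp (diagEquiv x) = γ x.1 * ((x.1.choose (x.2 : ℕ)) : ℝ) * a^(x.1 - (x.2:ℕ)) * z^(x.2:ℕ) := by
    rintro ⟨n, j⟩
    have hj : (j : ℕ) ≤ n := Nat.lt_succ_iff.mp j.isLt
    have h1 : (n - (j:ℕ)) + (j:ℕ) = n := by omega
    simp only [diagEquiv, Equiv.coe_fn_mk, hFpdef]
    rw [h1]
  have hfiber : ∀ (w : ℝ) (n : ℕ), 0 ≤ w →
      ∑ j : Fin (n+1), γ n * ((n.choose (j:ℕ)) : ℝ) * a^(n - (j:ℕ)) * w^(j:ℕ)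
        = γ n * (a + w)^n := by
    intro w n hw
    rw [Fin.sum_univ_eq_sum_range (fun j => γ n * ((n.choose j) : ℝ) * a^(n - j) * w^j)]
    rw [add_comm a w, add_pow, Finset.mul_sum]
    apply Finset.sum_congr rfl
    intro j hj
    ring
  have hsig_nn : ∀ x : Σ n : ℕ, Fin (n+1), 0 ≤ Fp (diagEquiv x) := fun x => hFpnn _
  have hsig_sum : Summable (fun x : Σ n : ℕ, Fin (n+1) => Fp (diagEquiv x)) := by
    rw [summable_sigma_of_nonneg hsig_nn]
    constructor
    · intro n
      exact (hasSum_fintype _).summable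
    · apply Summable.congr hs.summable
      intro n
      rw [← hfiber z n hz.le]
      rw [(hasSum_fintype (fun j : Fin (n+1) => Fp (diagEquiv ⟨n, j⟩))).tsum_eq]
      apply Finset.sum_congr rfl
      intro j _
      rw [hcomp ⟨n, j⟩]
  have hsig_hasSum : HasSum (fun x : Σ n : ℕ, Fin (n+1) => Fp (diagEquiv x)) s := by
    apply HasSum.sigma_of_hasSum hs _ hsig_sum
    intro n
    have h1 := hasSum_fintype (fun j : Fin (n+1) => Fp (diagEquiv ⟨n, j⟩))
    have h2 : ∑ j : Fin (n+1), Fp (diagEquiv ⟨n, j⟩) = γ n * (a+z)^n := by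
      rw [← hfiber z n hz.le]
      apply Finset.sum_congr rfl
      intro j _
      rw [hcomp ⟨n, j⟩]
    rwa [h2] at h1
  have hprod : HasSum Fp s := (Equiv.hasSum_iff diagEquiv).mp hsig_hasSum
  have hrows : ∀ k, Summable (fun m => Fp (k, m)) := fun k => hprod.summable.prod_factor k
  have hrow_nozk : ∀ k, Summable (fun m => γ (m+k) * ((m+k).choose k : ℝ) * a^m) := by
    intro k
    have h1 := (hrows k).mul_right ((z^k)⁻¹)
    apply h1.congr
    intro m
    have hzk : z^k ≠ 0 := by positivity
    field_simp [hFpdef]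
    simp only [hFpdef]
    ring
  refine ⟨hrow_nozk, ?_⟩
  apply HasSum.prod_fiberwise hprod
  intro k
  have h1 : HasSum (fun m => Fp (k, m)) (∑' m, Fp (k, m)) := (hrows k).hasSum
  have h2 : (∑' m, Fp (k, m)) = (∑' m, γ (m+k) * ((m+k).choose k : ℝ) * a^m) * z^k := by
    rw [← tsum_mul_right]
  exact h2 ▸ h1

lemma binom_rearrange_rev {γ : ℕ → ℝ} (hγ : ∀ m, 0 ≤ γ m) {a w : ℝ} (ha : 0 ≤ a) (hw : 0 < w)
    (hrows : ∀ k, Summable (fun m => γ (m+k) * ((m+k).choose k : ℝ) * a^m))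
    (hδ : Summable (fun k => (∑' m, γ (m+k) * ((m+k).choose k : ℝ) * a^m) * w^k)) :
    Summable (fun n => γ n * (a+w)^n) := by
  classical
  set Fp : ℕ × ℕ → ℝ := fun p => γ (p.2 + p.1) * (((p.2 + p.1).choose p.1 : ℕ) : ℝ) * a^p.2 * w^p.1
    with hFpdef
  have hFpnn : ∀ p, 0 ≤ Fp p := by
    intro p
    apply mul_nonneg
    apply mul_nonneg
    apply mul_nonneg (hγ _) (by positivity)
    all_goals positivity
  have hcomp : ∀ x : Σ n : ℕ, Fin (n+1),
      Fp (diagEquiv x) = γ x.1 * ((x.1.choose (x.2 : ℕ)) : ℝ) * a^(x.1 - (x.2:ℕ)) * w^(x.2:ℕ) := by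
    rintro ⟨n, j⟩
    have hj : (j : ℕ) ≤ n := Nat.lt_succ_iff.mp j.isLt
    have h1 : (n - (j:ℕ)) + (j:ℕ) = n := by omega
    simp only [diagEquiv, Equiv.coe_fn_mk, hFpdef]
    rw [h1]
  have hfiber : ∀ n : ℕ,
      ∑ j : Fin (n+1), γ n * ((n.choose (j:ℕ)) : ℝ) * a^(n - (j:ℕ)) * w^(j:ℕ)
        = γ n * (a + w)^n := by
    intro n
    rw [Fin.sum_univ_eq_sum_range (fun j => γ n * ((n.choose j) : ℝ) * a^(n - j) * w^j)]
    rw [add_comm a w, add_pow, Finset.mul_sum]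
    exact Finset.sum_congr rfl (fun j hj => by ring)
  have hFp : Summable Fp := by
    rw [summable_prod_of_nonneg hFpnn]
    constructor
    · intro k
      exact ((hrows k).mul_right (w^k)).congr (fun m => by rw [hFpdef])
    · apply Summable.congr hδ
      intro k
      rw [← tsum_mul_right]
  have hsig : Summable (fun x : Σ n : ℕ, Fin (n+1) => Fp (diagEquiv x)) :=
    (Equiv.summable_iff diagEquiv).mpr hFp
  have := (summable_sigma_of_nonneg (fun x => hFpnn _)).mp hsig
  apply Summable.congr this.2
  intro n
  rw [(hasSum_fintype (fun j : Fin (n+1) => Fp (diagEquiv ⟨n, j⟩))).tsum_eq]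
  rw [← hfiber n]
  exact Finset.sum_congr rfl (fun j _ => hcomp ⟨n, j⟩)

open scoped ComplexOrder

lemma coeff_nonneg_of_fd_pos {f : ℝ → ℂ} {c : ℕ → ℂ} {r₀ δ : ℝ} (hr₀ : 0 < r₀) (hδ : 0 < δ)
    (hrep : ∀ z : ℝ, |z| < r₀ → HasSum (fun m => c m * (z:ℂ)^m) (f z)) (N : ℕ)
    (hpos : ∀ u : ℝ, 0 < u → u < δ →
      0 ≤ ∑ j ∈ Finset.range (N+1), ∑ k ∈ Finset.range (N+1),
        ((-1:ℂ)^(j+k) * (N.choose j : ℂ) * (N.choose k : ℂ)) * f (((j * k : ℕ) : ℝ) * u)) :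
    0 ≤ c N := by
  classical
  set d : ℕ → ℂ := fun m => (((altS N m)^2 : ℝ) : ℂ) * c m with hd
  set G : ℝ → ℂ := fun u => ∑ j ∈ Finset.range (N+1), ∑ k ∈ Finset.range (N+1),
        ((-1:ℂ)^(j+k) * (N.choose j : ℂ) * (N.choose k : ℂ)) * f (((j * k : ℕ) : ℝ) * u) with hG
  set r₁ : ℝ := min δ (r₀ / ((N:ℝ)^2+1)) with hr₁def
  have hN1 : (0:ℝ) < (N:ℝ)^2 + 1 := by positivity
  have hr₁ : 0 < r₁ := lt_min hδ (by positivity)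
  have haltC : ∀ m, ((altS N m : ℝ) : ℂ) = ∑ j ∈ range (N+1), (-1:ℂ)^j * (N.choose j:ℂ) * (j:ℂ)^m := by
    intro m
    rw [altS]
    push_cast
    rfl
  have hGsum : ∀ u : ℝ, 0 < u → u < r₁ → HasSum (fun m => d m * (u:ℂ)^m) (G u) := by
    intro u hu hur
    have hterm : ∀ j ∈ range (N+1), ∀ k ∈ range (N+1),
        HasSum (fun m => ((-1:ℂ)^(j+k) * (N.choose j : ℂ) * (N.choose k : ℂ)) *
            (c m * (((((j*k:ℕ):ℝ) * u : ℝ)):ℂ)^m))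
          (((-1:ℂ)^(j+k) * (N.choose j : ℂ) * (N.choose k : ℂ)) * f (((j * k : ℕ) : ℝ) * u)) := by
      intro j hj k hk
      apply HasSum.mul_left
      apply hrep
      have hj' : j ≤ N := Nat.lt_succ_iff.mp (mem_range.mp hj)
      have hk' : k ≤ N := Nat.lt_succ_iff.mp (mem_range.mp hk)
      have hjk : ((j*k:ℕ):ℝ) ≤ (N:ℝ)^2 := by
        have h1 : j * k ≤ N * N := Nat.mul_le_mul hj' hk'
        have h2 : ((j*k:ℕ):ℝ) ≤ ((N*N:ℕ):ℝ) := by exact_mod_cast h1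
        calc ((j*k:ℕ):ℝ) ≤ ((N*N:ℕ):ℝ) := h2
          _ = (N:ℝ)^2 := by push_cast; ring
      have hjk0 : (0:ℝ) ≤ ((j*k:ℕ):ℝ) := by positivity
      rw [abs_of_nonneg (mul_nonneg hjk0 hu.le)]
      have h2 : ((j*k:ℕ):ℝ) * u ≤ (N:ℝ)^2 * u := mul_le_mul_of_nonneg_right hjk hu.le
      have h3 : u < r₀ / ((N:ℝ)^2+1) := lt_of_lt_of_le hur (min_le_right _ _)
      have h4 : (N:ℝ)^2 * u < r₀ := by
        rw [lt_div_iff₀ hN1] at h3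
        nlinarith
      linarith
    have hdouble : HasSum (fun m => ∑ j ∈ range (N+1), ∑ k ∈ range (N+1),
        ((-1:ℂ)^(j+k) * (N.choose j : ℂ) * (N.choose k : ℂ)) *
          (c m * (((((j*k:ℕ):ℝ) * u : ℝ)):ℂ)^m)) (G u) := by
      rw [hG]
      apply hasSum_sum
      intro j hj
      apply hasSum_sum
      intro k hk
      exact hterm j hj k hk
    have hfun : (fun m => ∑ j ∈ range (N+1), ∑ k ∈ range (N+1),
        ((-1:ℂ)^(j+k) * (N.choose j : ℂ) * (N.choose k : ℂ)) *
          (c m * (((((j*k:ℕ):ℝ) * u : ℝ)):ℂ)^m)) = fun m => d m * (u:ℂ)^m := by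
      funext m
      have hterm2 : ∀ j ∈ range (N+1), ∀ k ∈ range (N+1),
          ((-1:ℂ)^(j+k) * (N.choose j : ℂ) * (N.choose k : ℂ)) *
            (c m * (((((j*k:ℕ):ℝ) * u : ℝ)):ℂ)^m)
          = (((-1:ℂ)^j * (N.choose j:ℂ) * (j:ℂ)^m) * ((-1:ℂ)^k * (N.choose k:ℂ) * (k:ℂ)^m)) *
              (c m * (u:ℂ)^m) := by
        intro j _ k _
        push_cast
        ring
      calc (∑ j ∈ range (N+1), ∑ k ∈ range (N+1),
            ((-1:ℂ)^(j+k) * (N.choose j : ℂ) * (N.choose k : ℂ)) *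
              (c m * (((((j*k:ℕ):ℝ) * u : ℝ)):ℂ)^m))
          = ∑ j ∈ range (N+1), ∑ k ∈ range (N+1),
            (((-1:ℂ)^j * (N.choose j:ℂ) * (j:ℂ)^m) * ((-1:ℂ)^k * (N.choose k:ℂ) * (k:ℂ)^m)) *
              (c m * (u:ℂ)^m) := by
            apply Finset.sum_congr rfl
            intro j hj
            apply Finset.sum_congr rfl
            intro k hk
            exact hterm2 j hj k hk
        _ = ((∑ j ∈ range (N+1), (-1:ℂ)^j * (N.choose j:ℂ) * (j:ℂ)^m) *
              (∑ k ∈ range (N+1), (-1:ℂ)^k * (N.choose k:ℂ) * (k:ℂ)^m)) * (c m * (u:ℂ)^m) := by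
            rw [Finset.sum_mul_sum, Finset.sum_mul]
            apply Finset.sum_congr rfl
            intro j _
            rw [Finset.sum_mul]
        _ = d m * (u:ℂ)^m := by
            rw [← haltC, hd]
            push_cast
            ring
    rw [← hfun]
    exact hdouble
  have hdvanish : ∀ i, i < N → d i = 0 := by
    intro i hi
    have h0 : altS N i = 0 := altS_eq_zero hi
    simp only [hd, h0]
    norm_num
  have hdN : d N = (((N.factorial:ℝ)^2 : ℝ) : ℂ) * c N := by
    have h0 : altS N N ^ 2 = (N.factorial:ℝ)^2 := by
      rw [altS_self, mul_pow, ← pow_mul, mul_comm N 2, pow_mul]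
      norm_num
    simp only [hd, h0]
  have hshift : ∀ u : ℝ, 0 < u → u < r₁ →
      HasSum (fun m => d (m+N) * (u:ℂ)^m) (((u:ℂ)^N)⁻¹ * G u) := by
    intro u hu hur
    have h1 := (hasSum_nat_add_iff' (f := fun m => d m * (u:ℂ)^m) N).mpr (hGsum u hu hur)
    have hz : ∑ i ∈ range N, d i * (u:ℂ)^i = 0 :=
      Finset.sum_eq_zero (fun i hi => by rw [hdvanish i (mem_range.mp hi), zero_mul])
    rw [hz, sub_zero] at h1
    have h2 := h1.mul_left (((u:ℂ)^N)⁻¹)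
    have hu0 : (u:ℂ) ≠ 0 := by exact_mod_cast hu.ne'
    have hfun2 : (fun m => ((u:ℂ)^N)⁻¹ * (d (m+N) * (u:ℂ)^(m+N)))
        = fun m => d (m+N) * (u:ℂ)^m := by
      funext m
      rw [pow_add]
      field_simp
    rw [← hfun2]
    exact h2
  set u₁ : ℝ := r₁/2 with hu₁def
  have hu₁ : 0 < u₁ := by positivity
  have hu₁r : u₁ < r₁ := by rw [hu₁def]; linarith
  have hsum1 : Summable (fun m => ‖d (m+N) * (u₁:ℂ)^m‖) :=
    summable_norm_iff.mpr (hshift u₁ hu₁ hu₁r).summable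
  set A : ℝ := ∑' m, ‖d (m+N) * (u₁:ℂ)^m‖ with hAdef
  have hA : ∀ m, ‖d (m+N)‖ * u₁^m ≤ A := by
    intro m
    have := Summable.le_tsum hsum1 m (fun k _ => norm_nonneg _)
    rwa [norm_mul, norm_pow, Complex.norm_real, Real.norm_eq_abs, abs_of_pos hu₁] at this
  have hA0 : 0 ≤ A := le_trans (by positivity) (hA 0)
  set K : ℝ := 2*A/u₁ with hKdef
  have hK0 : 0 ≤ K := by positivity
  have hbound : ∀ u:ℝ, 0 < u → u ≤ u₁/4 → ‖(((u:ℂ)^N)⁻¹ * G u) - d N‖ ≤ K * u := by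
    intro u hu hu4
    have h1 := (geom_summable_bound (d := fun m => d (m+N)) hu₁ hA
      (u := u) (by rw [abs_of_pos hu]; exact hu4)).2
    have h2 : u < r₁ := by
      have : u₁/4 < r₁ := by rw [hu₁def]; linarith
      linarith
    rw [(hshift u hu h2).tsum_eq, zero_add, abs_of_pos hu] at h1
    exact h1
  have hHpos : ∀ u:ℝ, 0 < u → u < r₁ → 0 ≤ ((u:ℂ)^N)⁻¹ * G u := by
    intro u hu hur
    have hG0 : 0 ≤ G u := hpos u hu (lt_of_lt_of_le hur (min_le_left _ _))
    have hcast : ((u:ℂ)^N)⁻¹ = ((((u^N)⁻¹ : ℝ)) : ℂ) := by push_cast; rfl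
    rw [hcast]
    have h2 : (0:ℝ) ≤ (u^N)⁻¹ := by positivity
    exact mul_nonneg (Complex.zero_le_real.mpr h2) hG0
  -- pass to the limit u → 0⁺
  set u₂ : ℝ := min (u₁/4) (r₁/2) with hu₂def
  have hu₂ : 0 < u₂ := lt_min (by positivity) (by positivity)
  have hev : ∀ᶠ u in 𝓝[>](0:ℝ), -(K*u) ≤ (d N).re ∧ |(d N).im| ≤ K*u := by
    filter_upwards [Ioc_mem_nhdsGT_of_mem (Set.left_mem_Ico.mpr hu₂)] with u hu
    have hu0 : 0 < u := hu.1
    have hu4 : u ≤ u₁/4 := le_trans hu.2 (min_le_left _ _)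
    have hur : u < r₁ := lt_of_le_of_lt (le_trans hu.2 (min_le_right _ _)) (by linarith)
    have hb := hbound u hu0 hu4
    have hp := hHpos u hu0 hur
    rw [Complex.nonneg_iff] at hp
    constructor
    · have hre : |((((u:ℂ)^N)⁻¹ * G u) - d N).re| ≤ K*u :=
        le_trans (Complex.abs_re_le_norm _) hb
      rw [Complex.sub_re, abs_le] at hre
      linarith [hp.1, hre.1]
    · have him : |((((u:ℂ)^N)⁻¹ * G u) - d N).im| ≤ K*u :=
        le_trans (Complex.abs_im_le_norm _) hb
      rw [Complex.sub_im, ← hp.2, zero_sub, abs_neg] at him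
      exact him
  have htendK : Tendsto (fun u : ℝ => K * u) (𝓝[>] (0:ℝ)) (𝓝 0) := by
    apply tendsto_nhdsWithin_of_tendsto_nhds
    have hcont : Continuous (fun u : ℝ => K * u) := by continuity
    have := hcont.tendsto 0
    rwa [mul_zero] at this
  have hreN : 0 ≤ (d N).re := by
    have h1 : Tendsto (fun u : ℝ => -(K * u)) (𝓝[>] (0:ℝ)) (𝓝 0) := by
      have := htendK.neg
      rwa [neg_zero] at this
    exact le_of_tendsto h1 (hev.mono (fun u hu => hu.1))
  have himN : (d N).im = 0 := by
    have h1 : |(d N).im| ≤ 0 := ge_of_tendsto htendK (hev.mono (fun u hu => hu.2))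
    simpa using abs_nonpos_iff.mp h1
  have hdNpos : 0 ≤ d N := Complex.nonneg_iff.mpr ⟨hreN, himN.symm⟩
  -- conclude about c N
  have hβ : (0:ℝ) < (N.factorial:ℝ)^2 := by positivity
  rw [Complex.nonneg_iff] at hdNpos ⊢
  rw [hdN] at hdNpos
  simp only [Complex.mul_re, Complex.mul_im, Complex.ofReal_re, Complex.ofReal_im,
    zero_mul, sub_zero, zero_add, mul_zero] at hdNpos
  constructor
  · nlinarith [hdNpos.1]
  · have h2 : (N.factorial:ℝ)^2 * (c N).im = 0 := by linarith [hdNpos.2]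
    have := mul_eq_zero.mp h2
    rcases this with h | h
    · exact absurd h (ne_of_gt hβ)
    · exact h.symm

lemma hasSum_ofReal' {c : ℕ → ℝ} {z s : ℝ} (h : HasSum (fun m => c m * z^m) s) :
    HasSum (fun m => ((c m : ℝ) : ℂ) * (z:ℂ)^m) ((s : ℝ) : ℂ) := by
  have h1 := h.mapL Complex.ofRealCLM
  have hfun : (fun m => (Complex.ofRealCLM) (c m * z^m)) = fun m => ((c m : ℝ):ℂ) * (z:ℂ)^m := by
    funext m
    simp only [Complex.ofRealCLM_apply]
    push_cast
    ring
  rw [← hfun]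
  simpa using h1

lemma rep_on {γ : ℕ → ℝ} {F : ℝ → ℝ} {ρ r₀ : ℝ} (hγ : ∀ m, 0 ≤ γ m)
    (hρ : 0 < ρ) (hρ1 : ρ ≤ 1)
    (hFa : ∀ t : ℝ, |t| < 1 → AnalyticAt ℝ F t)
    (hr₀ : 0 < r₀) (hr₀ρ : r₀ ≤ ρ)
    (hrep0 : ∀ z : ℝ, |z| < r₀ → HasSum (fun m => γ m * z^m) (F z))
    (hsum : ∀ z : ℝ, |z| < ρ → Summable (fun m => γ m * z^m)) :
    ∀ z : ℝ, |z| < ρ → HasSum (fun m => γ m * z^m) (F z) := by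
  classical
  set P : FormalMultilinearSeries ℝ ℝ ℝ := ofScalars ℝ γ with hPdef
  have hPrad : ENNReal.ofReal ρ ≤ P.radius := by
    apply ENNReal.le_of_forall_nnreal_lt
    intro r hr
    have hr' : ENNReal.ofReal (r:ℝ) < ENNReal.ofReal ρ := by
      rwa [ENNReal.ofReal_coe_nnreal]
    have hrρ : (r : ℝ) < ρ := (ENNReal.ofReal_lt_ofReal_iff hρ).mp hr'
    apply P.le_radius_of_summable_norm
    apply Summable.congr (hsum r (by rw [abs_of_nonneg r.coe_nonneg]; exact hrρ))
    intro m
    rw [hPdef, ofScalars_norm, Real.norm_eq_abs, abs_of_nonneg (hγ m)]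
  have hrad0 : 0 < P.radius := lt_of_lt_of_le (by simp [ENNReal.ofReal_pos, hρ]) hPrad
  have hball := P.hasFPowerSeriesOnBall hrad0
  have hmem : ∀ z : ℝ, |z| < ρ → z ∈ Metric.eball (0:ℝ) P.radius := by
    intro z hz
    rw [Metric.mem_eball, edist_zero_right, ← ofReal_norm]
    apply lt_of_lt_of_le _ hPrad
    rw [ENNReal.ofReal_lt_ofReal_iff hρ, Real.norm_eq_abs]
    exact hz
  have hgsum : ∀ z : ℝ, |z| < ρ → HasSum (fun m => γ m * z^m) (P.sum z) := by
    intro z hz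
    have h1 := hball.hasSum (hmem z hz)
    rw [zero_add] at h1
    have hfun : (fun n => P n fun _ => z) = fun m => γ m * z^m := by
      funext n
      rw [apply_eq_pow_smul_coeff]
      have hc : P.coeff n = γ n := by
        calc P.coeff n = ofScalars ℝ γ n (fun _ => 1) := rfl
          _ = γ n • (1:ℝ)^n := ofScalars_apply_eq γ 1 n
          _ = γ n := by simp
      rw [hc, smul_eq_mul, mul_comm]
    rw [← hfun]
    exact h1
  have heq : Set.EqOn F P.sum (Set.Ioo (-ρ) ρ) := by
    have hFan : AnalyticOnNhd ℝ F (Set.Ioo (-ρ) ρ) := by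
      intro t ht
      exact hFa t (lt_of_lt_of_le (abs_lt.mpr ⟨ht.1, ht.2⟩) hρ1)
    have hgan : AnalyticOnNhd ℝ P.sum (Set.Ioo (-ρ) ρ) := by
      intro t ht
      exact hball.analyticOnNhd t (hmem t (abs_lt.mpr ⟨ht.1, ht.2⟩))
    apply AnalyticOnNhd.eqOn_of_preconnected_of_eventuallyEq hFan hgan
      (isPreconnected_Ioo) (Set.mem_Ioo.mpr ⟨by linarith, hρ⟩) (z₀ := 0)
    filter_upwards [Metric.ball_mem_nhds (0:ℝ) hr₀] with z hz
    rw [Metric.mem_ball, dist_zero_right, Real.norm_eq_abs] at hz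
    exact (hrep0 z hz).unique (hgsum z (lt_of_lt_of_le hz hr₀ρ))
  intro z hz
  rw [heq (Set.mem_Ioo.mpr (abs_lt.mp hz))]
  exact hgsum z hz

lemma pringsheim {F : ℝ → ℝ} {γ : ℕ → ℝ} (hγ : ∀ m, 0 ≤ γ m)
    (hFa : ∀ t : ℝ, |t| < 1 → AnalyticAt ℝ F t)
    {r₀ : ℝ} (hr₀ : 0 < r₀) (hr₀1 : r₀ ≤ 1)
    (hrep0 : ∀ z : ℝ, |z| < r₀ → HasSum (fun m => γ m * z^m) (F z)) :
    ∀ t : ℝ, |t| < 1 → HasSum (fun m => γ m * t^m) (F t) := by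
  classical
  set S : Set ℝ := {r | r ≤ 1 ∧ ∀ z : ℝ, |z| < r → Summable (fun m => γ m * z^m)} with hSdef
  have hr₀S : r₀ ∈ S := ⟨hr₀1, fun z hz => (hrep0 z hz).summable⟩
  have hbddS : BddAbove S := ⟨1, fun r hr => hr.1⟩
  set b : ℝ := sSup S with hbdef
  have hb1 : b ≤ 1 := csSup_le ⟨r₀, hr₀S⟩ (fun r hr => hr.1)
  have hbr₀ : r₀ ≤ b := le_csSup hbddS hr₀S
  have hb0 : 0 < b := lt_of_lt_of_le hr₀ hbr₀
  have hbsum : ∀ z : ℝ, |z| < b → Summable (fun m => γ m * z^m) := by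
    intro z hz
    obtain ⟨r, hrS, hzr⟩ := exists_lt_of_lt_csSup ⟨r₀, hr₀S⟩ hz
    exact hrS.2 z hzr
  have hbig : ¬ (b < 1) := by
    intro hb
    -- representation on (-b, b)
    have hrepb : ∀ z : ℝ, |z| < b → HasSum (fun m => γ m * z^m) (F z) :=
      rep_on hγ hb0 hb1 hFa hr₀ hbr₀ hrep0 hbsum
    -- F is analytic at b ; choose a ball radius ε
    obtain ⟨p, r, hpr⟩ := hFa b (by rw [abs_of_pos hb0]; exact hb)
    obtain ⟨ε₀, hε₀0, hε₀1, hε₀2⟩ := ENNReal.lt_iff_exists_real_btwn.mp hpr.r_pos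
    have hε₀pos : 0 < ε₀ := by
      rw [← ENNReal.ofReal_zero] at hε₀1
      exact (ENNReal.ofReal_lt_ofReal_iff_of_nonneg le_rfl).mp hε₀1
    set ε : ℝ := min ε₀ (min b (1 - b)) with hεdef
    have hε : 0 < ε := lt_min hε₀pos (lt_min hb0 (by linarith))
    have hεb : ε ≤ b := le_trans (min_le_right _ _) (min_le_left _ _)
    have hε1b : ε ≤ 1 - b := le_trans (min_le_right _ _) (min_le_right _ _)
    have hball : HasFPowerSeriesOnBall F p b (ENNReal.ofReal ε) := by
      apply hpr.mono (by simp [ENNReal.ofReal_pos, hε])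
      calc ENNReal.ofReal ε ≤ ENNReal.ofReal ε₀ := ENNReal.ofReal_le_ofReal (min_le_left _ _)
        _ ≤ r := hε₀2.le
    set a : ℝ := b - ε/3 with hadef
    have ha0 : 0 < a := by rw [hadef]; linarith
    have hab : a < b := by rw [hadef]; linarith
    -- change origin to `a`
    have hy : (↑‖-(ε/3)‖₊ : ENNReal) < ENNReal.ofReal ε := by
      rw [← enorm_eq_nnnorm, ← ofReal_norm, norm_neg, Real.norm_eq_abs,
        abs_of_pos (by linarith : (0:ℝ) < ε/3)]
      rw [ENNReal.ofReal_lt_ofReal_iff hε]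
      linarith
    have hco := hball.changeOrigin hy
    have hxy : b + -(ε/3) = a := by rw [hadef]; ring
    rw [hxy] at hco
    have hrad : ENNReal.ofReal (ε/2) ≤ ENNReal.ofReal ε - ↑‖-(ε/3)‖₊ := by
      rw [← enorm_eq_nnnorm, ← ofReal_norm, norm_neg, Real.norm_eq_abs,
        abs_of_pos (by linarith : (0:ℝ) < ε/3), ← ENNReal.ofReal_sub _ (by linarith)]
      apply ENNReal.ofReal_le_ofReal
      linarith
    have hco2 : HasFPowerSeriesOnBall F (p.changeOrigin (-(ε/3))) a (ENNReal.ofReal (ε/2)) :=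
      hco.mono (by simp [ENNReal.ofReal_pos]; linarith) hrad
    set Q := p.changeOrigin (-(ε/3)) with hQdef
    have hQsum : ∀ w : ℝ, |w| < ε/2 → HasSum (fun k => Q.coeff k * w^k) (F (a + w)) := by
      intro w hw
      have hmem : w ∈ Metric.eball (0:ℝ) (ENNReal.ofReal (ε/2)) := by
        rw [Metric.mem_eball, edist_zero_right, ← ofReal_norm,
          ENNReal.ofReal_lt_ofReal_iff (by linarith), Real.norm_eq_abs]
        exact hw
      have h1 := hco2.hasSum hmem
      have hfun : (fun n => Q n fun _ => w) = fun k => Q.coeff k * w^k := by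
        funext n
        rw [apply_eq_pow_smul_coeff, smul_eq_mul, mul_comm]
      rw [← hfun]
      exact h1
    -- the δ coefficients
    set δ : ℕ → ℝ := fun k => ∑' m, γ (m+k) * ((m+k).choose k : ℝ) * a^m with hδdef
    have hrows : ∀ k, Summable (fun m => γ (m+k) * ((m+k).choose k : ℝ) * a^m) := by
      have h1 : |a + ε/6| < b := by
        rw [abs_of_pos (by linarith)]
        rw [hadef]; linarith
      exact (binom_rearrange hγ ha0.le (by linarith : (0:ℝ) < ε/6) (hrepb _ h1)).1
    have hδrep : ∀ z : ℝ, 0 < z → z < ε/3 → HasSum (fun k => δ k * z^k) (F (a + z)) := by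
      intro z hz hz3
      have h1 : |a + z| < b := by
        rw [abs_of_pos (by linarith)]
        rw [hadef]; linarith
      exact (binom_rearrange hγ ha0.le hz (hrepb _ h1)).2
    -- uniqueness: δ agrees with the coefficients of Q
    have huniq : ∀ k, δ k = Q.coeff k := by
      have h1 : ∀ z : ℝ, 0 < z → z < ε/3 →
          HasSum (fun k => ((δ k : ℝ) : ℂ) * (z:ℂ)^k) (((F (a + z) : ℝ) : ℂ)) :=
        fun z hz hz3 => hasSum_ofReal' (hδrep z hz hz3)
      have h2 : ∀ z : ℝ, 0 < z → z < ε/3 →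
          HasSum (fun k => ((Q.coeff k : ℝ) : ℂ) * (z:ℂ)^k) (((F (a + z) : ℝ) : ℂ)) :=
        fun z hz hz3 => hasSum_ofReal' (hQsum z (by rw [abs_of_pos hz]; linarith))
      intro k
      have h3 := coeff_unique_of_hasSum (r := ε/3) (by linarith)
        (f := fun z : ℝ => ((F (a + z) : ℝ) : ℂ)) h1 h2 k
      exact_mod_cast h3
    have hδrep2 : ∀ w : ℝ, |w| < ε/2 → HasSum (fun k => δ k * w^k) (F (a + w)) := by
      intro w hw
      have h1 := hQsum w hw
      have hfun : (fun k => Q.coeff k * w^k) = fun k => δ k * w^k := by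
        funext k
        rw [huniq k]
      rw [← hfun]
      exact h1
    -- now enlarge the summability region, contradiction with sSup
    set b' : ℝ := min 1 (b + ε/6) with hb'def
    have hb'S : b' ∈ S := by
      refine ⟨min_le_left _ _, ?_⟩
      intro z hz
      rcases lt_or_ge (|z|) b with hcase | hcase
      · exact hbsum z hcase
      · have hzb' : |z| < b + ε/6 := lt_of_lt_of_le hz (min_le_right _ _)
        set t : ℝ := |z| with htdef
        set w : ℝ := t - a with hwdef
        have hw0 : 0 < w := by
          rw [hwdef, hadef]
          have : b ≤ t := hcase
          linarith
        have hw2 : w < ε/2 := by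
          rw [hwdef, hadef]
          have : t < b + ε/6 := hzb'
          linarith
        have hδs : Summable (fun k => δ k * w^k) :=
          (hδrep2 w (by rw [abs_of_pos hw0]; exact hw2)).summable
        simp only [hδdef] at hδs
        have hsumt : Summable (fun n => γ n * t^n) := by
          have h4 := binom_rearrange_rev hγ ha0.le hw0 hrows hδs
          rwa [show a + w = t by rw [hwdef]; ring] at h4
        rw [← summable_abs_iff]
        apply Summable.congr hsumt
        intro n
        rw [abs_mul, abs_pow, abs_of_nonneg (hγ n), htdef]
    have hb'b : b < b' := lt_min hb (by linarith)
    have := le_csSup hbddS hb'S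
    rw [← hbdef] at this
    linarith
  have hb1' : b = 1 := le_antisymm hb1 (not_lt.mp hbig)
  intro t ht
  exact rep_on hγ one_pos le_rfl hFa hr₀ hr₀1 hrep0
    (fun z hz => hbsum z (by rw [hb1']; exact hz)) t ht

lemma polar4 {a b cc d : ℂ} : (1/4:ℂ) * ∑ k ∈ Finset.range 4, Complex.I^k *
    (a + Complex.I^k * b + (starRingEnd ℂ) (Complex.I^k) * cc
      + (starRingEnd ℂ) (Complex.I^k) * Complex.I^k * d) = cc := by
  have h2 : Complex.I^2 = -1 := Complex.I_sq
  have h3 : Complex.I^3 = -Complex.I := by rw [pow_succ, h2]; ring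
  simp only [Finset.sum_range_succ, Finset.range_zero, Finset.sum_empty, pow_zero, pow_one,
    map_pow, Complex.conj_I, map_one, one_mul, zero_add, h2, h3]
  have h4 : Complex.I^4 = 1 := by rw [pow_succ, h3]; simp [Complex.I_mul_I]
  have h5 : Complex.I^5 = Complex.I := by rw [pow_succ, h4, one_mul]
  ring_nf
  rw [h2, h3, h4, h5]
  ring

lemma KP {V : Type*} [NormedAddCommGroup V] [InnerProductSpace ℂ V] [CompleteSpace V]
    (φ : ℝ → (V →L[ℂ] V))
    (hpd : ∀ (m : ℕ) (s : Fin m → ℝ), (∀ j, |s j| < 1) → ∀ v : Fin m → V,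
        0 ≤ ∑ j, ∑ k, (inner ℂ (v j) (φ (s j * s k) (v k)) : ℂ))
    (x : V)
    (hfa : ∀ t : ℝ, |t| < 1 → AnalyticAt ℝ (fun s : ℝ => (inner ℂ x (φ s x) : ℂ)) t) :
    ∃ γ : ℕ → ℝ, (∀ m, 0 ≤ γ m) ∧
      ∀ t : ℝ, |t| < 1 → HasSum (fun m => ((γ m : ℝ) : ℂ) * (t:ℂ)^m)
        ((inner ℂ x (φ t x) : ℂ)) := by
  classical
  set f : ℝ → ℂ := fun s => (inner ℂ x (φ s x) : ℂ) with hfdef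
  obtain ⟨p, hp⟩ := hfa 0 (by norm_num)
  rw [hasFPowerSeriesAt_iff] at hp
  rw [Metric.eventually_nhds_iff] at hp
  obtain ⟨r₂, hr₂pos, hp⟩ := hp
  set r₁ : ℝ := min r₂ 1 with hr₁def
  have hr₁pos : 0 < r₁ := lt_min hr₂pos one_pos
  have hr₁le : r₁ ≤ 1 := min_le_right _ _
  have hrep : ∀ z : ℝ, |z| < r₁ → HasSum (fun m => p.coeff m * (z:ℂ)^m) (f z) := by
    intro z hz
    have h1 := hp (y := z)
      (by rw [dist_zero_right, Real.norm_eq_abs]; exact lt_of_lt_of_le hz (min_le_left _ _))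
    rw [zero_add] at h1
    have hfun : (fun n => z^n • p.coeff n) = fun m => p.coeff m * (z:ℂ)^m := by
      funext m
      rw [Complex.real_smul, mul_comm]
      norm_cast
    rw [← hfun]
    exact h1
  have hcpos : ∀ N, 0 ≤ p.coeff N := by
    intro N
    apply coeff_nonneg_of_fd_pos (δ := (1/((N:ℝ)+1))^2) hr₁pos (by positivity) hrep N
    intro u hu huδ
    have hsq : Real.sqrt u * Real.sqrt u = u := Real.mul_self_sqrt hu.le
    have hsqlt : Real.sqrt u < 1/((N:ℝ)+1) := by
      have h1 : Real.sqrt u < Real.sqrt ((1/((N:ℝ)+1))^2) := Real.sqrt_lt_sqrt hu.le huδ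
      rwa [Real.sqrt_sq (by positivity)] at h1
    have hNs : ((N:ℝ)+1) * Real.sqrt u < 1 := by
      have := (lt_div_iff₀ (by positivity : (0:ℝ) < (N:ℝ)+1)).mp
        (by rw [div_eq_mul_inv, one_mul] at hsqlt ⊢; simpa [one_div] using hsqlt)
      linarith [this]
    set s : Fin (N+1) → ℝ := fun j => ((j:ℕ):ℝ) * Real.sqrt u with hsdef
    have hslt : ∀ j : Fin (N+1), |s j| < 1 := by
      intro j
      have hj : ((j:ℕ):ℝ) ≤ (N:ℝ) := by exact_mod_cast Nat.lt_succ_iff.mp j.isLt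
      have h7 : ((j:ℕ):ℝ) * Real.sqrt u ≤ (N:ℝ) * Real.sqrt u :=
        mul_le_mul_of_nonneg_right hj (Real.sqrt_nonneg u)
      rw [hsdef, abs_of_nonneg (by positivity)]
      have h8 := Real.sqrt_nonneg u
      show ((j:ℕ):ℝ) * Real.sqrt u < 1
      linarith [h7, h8, hNs]
    set w : Fin (N+1) → V := fun j => ((((-1:ℝ)^(j:ℕ) * (N.choose (j:ℕ)) : ℝ)):ℂ) • x with hwdef
    have h0 := hpd (N+1) s hslt w
    have hterm : ∀ j k : Fin (N+1),
        (inner ℂ (w j) (φ (s j * s k) (w k)) : ℂ)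
          = ((-1:ℂ)^((j:ℕ)+(k:ℕ)) * (N.choose (j:ℕ) : ℂ) * (N.choose (k:ℕ) : ℂ))
            * f ((((j:ℕ) * (k:ℕ) : ℕ) : ℝ) * u) := by
      intro j k
      have hsjk : s j * s k = (((j:ℕ) * (k:ℕ) : ℕ) : ℝ) * u := by
        rw [hsdef]
        push_cast
        rw [mul_mul_mul_comm, hsq]
      rw [hwdef, hsjk]
      simp only [map_smul, inner_smul_left, inner_smul_right, Complex.conj_ofReal, smul_smul]
      rw [hfdef]
      push_cast
      ring
    have hdbl : ∑ j, ∑ k, (inner ℂ (w j) (φ (s j * s k) (w k)) : ℂ)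
        = ∑ j ∈ Finset.range (N+1), ∑ k ∈ Finset.range (N+1),
        ((-1:ℂ)^(j+k) * (N.choose j : ℂ) * (N.choose k : ℂ)) * f (((j * k : ℕ) : ℝ) * u) := by
      rw [← Fin.sum_univ_eq_sum_range (fun j => ∑ k ∈ Finset.range (N+1),
        ((-1:ℂ)^(j+k) * (N.choose j : ℂ) * (N.choose k : ℂ)) * f (((j * k : ℕ) : ℝ) * u))]
      apply Finset.sum_congr rfl
      intro j _
      rw [← Fin.sum_univ_eq_sum_range (fun k =>
        ((-1:ℂ)^((j:ℕ)+k) * (N.choose (j:ℕ) : ℂ) * (N.choose k : ℂ)) * f ((((j:ℕ) * k : ℕ) : ℝ) * u))]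
      apply Finset.sum_congr rfl
      intro k _
      exact hterm j k
    rw [← hdbl]
    exact h0
  set γ : ℕ → ℝ := fun m => (p.coeff m).re with hγdef
  have hγnn : ∀ m, 0 ≤ γ m := fun m => (Complex.nonneg_iff.mp (hcpos m)).1
  have hcoe : ∀ m, p.coeff m = ((γ m : ℝ) : ℂ) := by
    intro m
    have h1 := (Complex.nonneg_iff.mp (hcpos m)).2
    apply Complex.ext
    · rfl
    · rw [hγdef, Complex.ofReal_im]
      exact h1.symm
  refine ⟨γ, hγnn, ?_⟩
  -- real part function
  set F : ℝ → ℝ := fun t => (f t).re with hFdef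
  have hFa : ∀ t : ℝ, |t| < 1 → AnalyticAt ℝ F t := by
    intro t ht
    exact (Complex.reCLM.analyticAt (f t)).comp (hfa t ht)
  have hFrep : ∀ z : ℝ, |z| < r₁ → HasSum (fun m => γ m * z^m) (F z) := by
    intro z hz
    have h1 := (hrep z hz).mapL Complex.reCLM
    have hfun : (fun m => Complex.reCLM (p.coeff m * (z:ℂ)^m)) = fun m => γ m * z^m := by
      funext m
      rw [hcoe m]
      simp only [Complex.reCLM_apply]
      rw [← Complex.ofReal_pow, ← Complex.ofReal_mul, Complex.ofReal_re]
    rw [← hfun]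
    exact h1
  have hFall := pringsheim hγnn hFa hr₁pos hr₁le hFrep
  -- identity theorem: f = ofReal ∘ F on (-1,1)
  have hID : Set.EqOn f (fun t => ((F t : ℝ) : ℂ)) (Set.Ioo (-1:ℝ) 1) := by
    have hfan : AnalyticOnNhd ℝ f (Set.Ioo (-1:ℝ) 1) := by
      intro t ht
      exact hfa t (abs_lt.mpr ⟨ht.1, ht.2⟩)
    have hgan : AnalyticOnNhd ℝ (fun t => ((F t : ℝ) : ℂ)) (Set.Ioo (-1:ℝ) 1) := by
      intro t ht
      exact (Complex.ofRealCLM.analyticAt (F t)).comp (hFa t (abs_lt.mpr ⟨ht.1, ht.2⟩))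
    apply AnalyticOnNhd.eqOn_of_preconnected_of_eventuallyEq hfan hgan isPreconnected_Ioo
      (Set.mem_Ioo.mpr ⟨by norm_num, by norm_num⟩) (z₀ := 0)
    filter_upwards [Metric.ball_mem_nhds (0:ℝ) hr₁pos] with z hz
    rw [Metric.mem_ball, dist_zero_right, Real.norm_eq_abs] at hz
    have h1 := hrep z hz
    have h2 := hasSum_ofReal' (hFrep z hz)
    have hfun : (fun m => ((γ m : ℝ) : ℂ) * (z:ℂ)^m) = fun m => p.coeff m * (z:ℂ)^m := by
      funext m
      rw [hcoe m]
    rw [hfun] at h2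
    exact h1.unique h2
  intro t ht
  have h1 := hasSum_ofReal' (hFall t ht)
  have h2 : ((F t : ℝ) : ℂ) = f t := (hID (Set.mem_Ioo.mpr (abs_lt.mp ht))).symm
  rw [h2] at h1
  exact h1

theorem bounded_weakly_analytic_pd_is_cp
    {V : Type v} [NormedAddCommGroup V] [InnerProductSpace ℂ V] [CompleteSpace V]
    (φ : ℝ → (V →L[ℂ] V))
    -- φ is bounded on (−1,1):
    (hbdd : ∃ M : ℝ, ∀ t : ℝ, |t| < 1 → ‖φ t‖ ≤ M)
    -- φ is positive definite on the *-semigroup ((−1,1), ·) with trivial involution: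
    (hpd : ∀ (m : ℕ) (s : Fin m → ℝ), (∀ j, |s j| < 1) →
      ∀ v : Fin m → V,
        0 ≤ ∑ j, ∑ k, (inner ℂ (v j) (φ (s j * s k) (v k)) : ℂ))
    -- φ is weakly analytic:
    (hana : ∃ E : Submodule ℂ V, Dense (E : Set V) ∧
      ∀ v ∈ E, ∀ w ∈ E, ∀ t : ℝ, |t| < 1 →
        AnalyticAt ℝ (fun x : ℝ => (inner ℂ w (φ x v) : ℂ)) t) :
    -- then φ is completely positive on (−1,1):
    ∀ (n : ℕ) (M : Matrix (Fin n) (Fin n) ℝ), M.PosSemidef →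
      (∀ i j, |M i j| < 1) →
      ∀ v : Fin n → V, 0 ≤ ∑ i, ∑ j, (inner ℂ (v i) (φ (M i j) (v j)) : ℂ) := by
  classical
  obtain ⟨EE, hEdense, hEana⟩ := hana
  have hKP : ∀ x : V, x ∈ EE → ∃ γ : ℕ → ℝ, (∀ m, 0 ≤ γ m) ∧
      ∀ t : ℝ, |t| < 1 → HasSum (fun m => ((γ m : ℝ) : ℂ) * (t:ℂ)^m)
        ((inner ℂ x (φ t x) : ℂ)) :=
    fun x hx => KP φ hpd x (fun t ht => hEana x hx x hx t ht)
  choose! Γ hΓnn hΓrep using hKP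
  intro n Mat hpsd hent v
  suffices hkey : ∀ w : Fin n → V, (∀ i, w i ∈ EE) →
      0 ≤ ∑ i, ∑ j, (inner ℂ (w i) (φ (Mat i j) (w j)) : ℂ) by
    have hseq : ∀ i : Fin n, ∃ u : ℕ → V, (∀ l, u l ∈ EE) ∧ Tendsto u atTop (𝓝 (v i)) := by
      intro i
      have h1 : v i ∈ closure (EE : Set V) := by rw [hEdense.closure_eq]; trivial
      exact mem_closure_iff_seq_limit.mp h1
    choose u hu1 hu2 using hseq
    have htend : Tendsto (fun l => ∑ i, ∑ j, (inner ℂ (u i l) (φ (Mat i j) (u j l)) : ℂ))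
        atTop (𝓝 (∑ i, ∑ j, (inner ℂ (v i) (φ (Mat i j) (v j)) : ℂ))) := by
      apply tendsto_finset_sum
      intro i _
      apply tendsto_finset_sum
      intro j _
      exact Filter.Tendsto.inner (hu2 i) (((φ (Mat i j)).continuous.tendsto _).comp (hu2 j))
    have hnn : ∀ l, 0 ≤ ∑ i, ∑ j, (inner ℂ (u i l) (φ (Mat i j) (u j l)) : ℂ) :=
      fun l => hkey (fun i => u i l) (fun i => hu1 i l)
    rw [Complex.nonneg_iff]
    constructor
    · apply ge_of_tendsto ((Complex.continuous_re.tendsto _).comp htend)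
      exact Eventually.of_forall (fun l => (Complex.nonneg_iff.mp (hnn l)).1)
    · have h1 := (Complex.continuous_im.tendsto _).comp htend
      have h2 : ((fun z : ℂ => z.im) ∘ (fun l => ∑ i, ∑ j,
          (inner ℂ (u i l) (φ (Mat i j) (u j l)) : ℂ))) = fun _ => (0:ℝ) :=
        funext fun l => ((Complex.nonneg_iff.mp (hnn l)).2).symm
      rw [h2] at h1
      exact tendsto_nhds_unique tendsto_const_nhds h1
  intro w hw
  set c : Fin n → Fin n → ℕ → ℂ := fun i j m => (1/4 : ℂ) * ∑ k ∈ Finset.range 4,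
      Complex.I^k * ((Γ (w j + Complex.I^k • w i) m : ℝ) : ℂ) with hcdef
  have hxxE : ∀ (i j : Fin n) (k : ℕ), w j + Complex.I^k • w i ∈ EE :=
    fun i j k => EE.add_mem (hw j) (EE.smul_mem _ (hw i))
  have hrepc : ∀ (i j : Fin n) (t : ℝ), |t| < 1 →
      HasSum (fun m => c i j m * (t:ℂ)^m) ((inner ℂ (w i) (φ t (w j)) : ℂ)) := by
    intro i j t ht
    have h1 : HasSum (fun m => ∑ k ∈ Finset.range 4,
        Complex.I^k * ((Γ (w j + Complex.I^k • w i) m :ℝ):ℂ) * (t:ℂ)^m)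
        (∑ k ∈ Finset.range 4, Complex.I^k * (inner ℂ (w j + Complex.I^k • w i)
          (φ t (w j + Complex.I^k • w i)) : ℂ)) := by
      apply hasSum_sum
      intro k _
      have h2 := (hΓrep _ (hxxE i j k) t ht).mul_left (Complex.I^k)
      have hfun : (fun m => Complex.I^k * (((Γ (w j + Complex.I^k • w i) m:ℝ):ℂ) * (t:ℂ)^m))
          = fun m => Complex.I^k * ((Γ (w j + Complex.I^k • w i) m:ℝ):ℂ) * (t:ℂ)^m := by
        funext m
        ring
      rw [← hfun]
      exact h2
    have h3 := h1.mul_left (1/4 : ℂ)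
    have hval : (1/4:ℂ) * (∑ k ∈ Finset.range 4, Complex.I^k * (inner ℂ (w j + Complex.I^k • w i)
          (φ t (w j + Complex.I^k • w i)) : ℂ)) = (inner ℂ (w i) (φ t (w j)) : ℂ) := by
      have hexp : ∀ k : ℕ, (inner ℂ (w j + Complex.I^k • w i) (φ t (w j + Complex.I^k • w i)) : ℂ)
          = (inner ℂ (w j) (φ t (w j)) : ℂ) + Complex.I^k * (inner ℂ (w j) (φ t (w i)) : ℂ)
            + (starRingEnd ℂ) (Complex.I^k) * (inner ℂ (w i) (φ t (w j)) : ℂ)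
            + (starRingEnd ℂ) (Complex.I^k) * Complex.I^k * (inner ℂ (w i) (φ t (w i)) : ℂ) := by
        intro k
        simp only [map_add, map_smul, inner_add_left, inner_add_right,
          inner_smul_left, inner_smul_right]
        ring
      calc (1/4:ℂ) * ∑ k ∈ Finset.range 4, Complex.I^k * (inner ℂ (w j + Complex.I^k • w i)
            (φ t (w j + Complex.I^k • w i)) : ℂ)
          = (1/4:ℂ) * ∑ k ∈ Finset.range 4, Complex.I^k * ((inner ℂ (w j) (φ t (w j)) : ℂ)
            + Complex.I^k * (inner ℂ (w j) (φ t (w i)) : ℂ)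
            + (starRingEnd ℂ) (Complex.I^k) * (inner ℂ (w i) (φ t (w j)) : ℂ)
            + (starRingEnd ℂ) (Complex.I^k) * Complex.I^k * (inner ℂ (w i) (φ t (w i)) : ℂ)) := by
            congr 1
            exact Finset.sum_congr rfl (fun k _ => by rw [hexp k])
        _ = _ := polar4
    rw [hval] at h3
    have hfun2 : (fun m => (1/4:ℂ) * (∑ k ∈ Finset.range 4,
        Complex.I^k * ((Γ (w j + Complex.I^k • w i) m:ℝ):ℂ) * (t:ℂ)^m))
        = fun m => c i j m * (t:ℂ)^m := by
      funext m
      rw [hcdef]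
      rw [← Finset.sum_mul]
      ring
    rw [← hfun2]
    exact h3
  have hforms : ∀ (m : ℕ) (lam : Fin n → ℝ),
      0 ≤ ∑ i, ∑ j, ((lam i : ℂ) * (lam j : ℂ)) * c i j m := by
    intro m lam
    set y : V := ∑ i, (lam i : ℂ) • w i with hydef
    have hyE : y ∈ EE := Submodule.sum_mem _ (fun i _ => EE.smul_mem _ (hw i))
    have hfn : ∀ t:ℝ, (inner ℂ y (φ t y) : ℂ)
        = ∑ i, ∑ j, ((lam i :ℂ) * (lam j :ℂ)) * (inner ℂ (w i) (φ t (w j)) : ℂ) := by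
      intro t
      rw [hydef]
      simp only [map_sum, map_smul, sum_inner, inner_sum, inner_smul_left, inner_smul_right,
        Complex.conj_ofReal, Finset.mul_sum]
      rw [Finset.sum_comm]
      apply Finset.sum_congr rfl
      intro i _
      apply Finset.sum_congr rfl
      intro j _
      ring
    have hrepB : ∀ z:ℝ, 0 < z → z < 1 →
        HasSum (fun m => (∑ i, ∑ j, ((lam i:ℂ)*(lam j:ℂ)) * c i j m) * (z:ℂ)^m)
          ((inner ℂ y (φ z y) : ℂ)) := by
      intro z hz hz1
      have habs : |z| < 1 := by rw [abs_of_pos hz]; exact hz1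
      have h1 : HasSum (fun m => ∑ i, ∑ j, ((lam i:ℂ)*(lam j:ℂ)) * c i j m * (z:ℂ)^m)
          (∑ i, ∑ j, ((lam i:ℂ)*(lam j:ℂ)) * (inner ℂ (w i) (φ z (w j)):ℂ)) := by
        apply hasSum_sum
        intro i _
        apply hasSum_sum
        intro j _
        have h2 := (hrepc i j z habs).mul_left ((lam i:ℂ)*(lam j:ℂ))
        have hfun : (fun m => ((lam i:ℂ)*(lam j:ℂ)) * (c i j m * (z:ℂ)^m))
            = fun m => ((lam i:ℂ)*(lam j:ℂ)) * c i j m * (z:ℂ)^m := by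
          funext m
          ring
        rw [← hfun]
        exact h2
      rw [← hfn z] at h1
      have hfun3 : (fun m => ∑ i, ∑ j, ((lam i:ℂ)*(lam j:ℂ)) * c i j m * (z:ℂ)^m)
          = fun m => (∑ i, ∑ j, ((lam i:ℂ)*(lam j:ℂ)) * c i j m) * (z:ℂ)^m := by
        funext m
        rw [Finset.sum_mul]
        apply Finset.sum_congr rfl
        intro i _
        rw [Finset.sum_mul]
      rw [← hfun3]
      exact h1
    have hrepA : ∀ z:ℝ, 0 < z → z < 1 →
        HasSum (fun m => ((Γ y m : ℝ):ℂ) * (z:ℂ)^m) ((inner ℂ y (φ z y) : ℂ)) := by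
      intro z hz hz1
      exact hΓrep y hyE z (by rw [abs_of_pos hz]; exact hz1)
    have huq := coeff_unique_of_hasSum one_pos
      (f := fun z : ℝ => (inner ℂ y (φ z y) : ℂ)) hrepB hrepA m
    rw [huq]
    exact Complex.zero_le_real.mpr (hΓnn y hyE m)
  obtain ⟨B, hB⟩ : ∃ B : Matrix (Fin n) (Fin n) ℝ, Mat = B.conjTranspose * B := by
    open scoped MatrixOrder in exact CStarAlgebra.nonneg_iff_eq_star_mul_self.mp hpsd.nonneg
  have hMentry : ∀ i j, ((Mat i j:ℝ):ℂ) = ∑ l, (B l i : ℂ) * (B l j : ℂ) := by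
    intro i j
    have h1 : Mat i j = ∑ l, B l i * B l j := by
      rw [hB]
      simp [Matrix.mul_apply, Matrix.conjTranspose_apply]
    rw [h1]
    push_cast
    rfl
  have hTm : ∀ m, 0 ≤ ∑ i, ∑ j, c i j m * ((Mat i j : ℝ):ℂ)^m := by
    intro m
    have hpow : ∀ i j, ((Mat i j :ℝ):ℂ)^m
        = ∑ g ∈ Fintype.piFinset (fun _ : Fin m => (Finset.univ : Finset (Fin n))),
            (∏ t : Fin m, (B (g t) i : ℂ)) * (∏ t : Fin m, (B (g t) j : ℂ)) := by
      intro i j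
      rw [hMentry i j]
      have h1 : (∑ l, (B l i:ℂ) * (B l j:ℂ))^m
          = ∏ _t : Fin m, (∑ l, (B l i:ℂ) * (B l j:ℂ)) := by
        rw [Finset.prod_const, Finset.card_univ, Fintype.card_fin]
      rw [h1, Finset.prod_univ_sum]
      apply Finset.sum_congr rfl
      intro g _
      rw [← Finset.prod_mul_distrib]
    have hexpand : ∑ i, ∑ j, c i j m * ((Mat i j:ℝ):ℂ)^m
        = ∑ g ∈ Fintype.piFinset (fun _ : Fin m => (Finset.univ : Finset (Fin n))),
            ∑ i, ∑ j, ((∏ t : Fin m, (B (g t) i:ℂ)) * (∏ t : Fin m, (B (g t) j:ℂ))) * c i j m := by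
      calc ∑ i, ∑ j, c i j m * ((Mat i j:ℝ):ℂ)^m
          = ∑ i, ∑ j, ∑ g ∈ Fintype.piFinset (fun _ : Fin m => (Finset.univ : Finset (Fin n))),
              c i j m * ((∏ t : Fin m, (B (g t) i:ℂ)) * (∏ t : Fin m, (B (g t) j:ℂ))) := by
            apply Finset.sum_congr rfl
            intro i _
            apply Finset.sum_congr rfl
            intro j _
            rw [hpow i j, Finset.mul_sum]
        _ = ∑ i, ∑ g ∈ Fintype.piFinset (fun _ : Fin m => (Finset.univ : Finset (Fin n))),
              ∑ j, c i j m * ((∏ t : Fin m, (B (g t) i:ℂ)) * (∏ t : Fin m, (B (g t) j:ℂ))) := by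
            apply Finset.sum_congr rfl
            intro i _
            rw [Finset.sum_comm]
        _ = ∑ g ∈ Fintype.piFinset (fun _ : Fin m => (Finset.univ : Finset (Fin n))),
              ∑ i, ∑ j, c i j m * ((∏ t : Fin m, (B (g t) i:ℂ)) * (∏ t : Fin m, (B (g t) j:ℂ))) :=
            Finset.sum_comm
        _ = _ := by
            apply Finset.sum_congr rfl
            intro g _
            apply Finset.sum_congr rfl
            intro i _
            apply Finset.sum_congr rfl
            intro j _
            ring
    rw [hexpand]
    apply Finset.sum_nonneg
    intro g _
    have h2 := hforms m (fun i => ∏ t : Fin m, B (g t) i)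
    have hfun : ∀ i j : Fin n, (((∏ t : Fin m, B (g t) i : ℝ)):ℂ) * (((∏ t : Fin m, B (g t) j : ℝ)):ℂ) * c i j m
        = ((∏ t : Fin m, (B (g t) i:ℂ)) * (∏ t : Fin m, (B (g t) j:ℂ))) * c i j m := by
      intro i j
      push_cast
      ring
    calc (0:ℂ) ≤ ∑ i, ∑ j, (((∏ t : Fin m, B (g t) i : ℝ)):ℂ) * (((∏ t : Fin m, B (g t) j : ℝ)):ℂ) * c i j m := h2
      _ = ∑ i, ∑ j, ((∏ t : Fin m, (B (g t) i:ℂ)) * (∏ t : Fin m, (B (g t) j:ℂ))) * c i j m := by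
          apply Finset.sum_congr rfl
          intro i _
          apply Finset.sum_congr rfl
          intro j _
          exact hfun i j
  have htotal : HasSum (fun m => ∑ i, ∑ j, c i j m * ((Mat i j:ℝ):ℂ)^m)
      (∑ i, ∑ j, (inner ℂ (w i) (φ (Mat i j) (w j)) : ℂ)) := by
    apply hasSum_sum
    intro i _
    apply hasSum_sum
    intro j _
    exact hrepc i j (Mat i j) (hent i j)
  rw [Complex.nonneg_iff]
  constructor
  · have h1 := htotal.mapL Complex.reCLM
    apply hasSum_le (fun m => (Complex.nonneg_iff.mp (hTm m)).1) hasSum_zero h1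
  · have h1 := htotal.mapL Complex.imCLM
    have h2 : (fun m => Complex.imCLM (∑ i, ∑ j, c i j m * ((Mat i j:ℝ):ℂ)^m)) = fun _ => (0:ℝ) :=
      funext fun m => ((Complex.nonneg_iff.mp (hTm m)).2).symm
    rw [h2] at h1
    exact hasSum_zero.unique h1

end
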